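/- arXiv:2507.14701 — 5 statements merged into one kernel-verified Lean document; each statement's English description precedes it below -/
import Mathlib

section
/- For every n ≥ 1 there exists exactly one solution of the n×n Pulsar puzzle; that is, there is a unique Latin square f of order n such that for every cell (r,c) ∈ C_n, f(r,c) equals the number of cells (r',c') ∈ C_n with f(r',c') = f(r,c). -/
/-!
Write `ρ r` and `κ c` for the numbers of circled cells in row `r` and column `c`. Following the
recursion defining `C_n`, both are permutations of `{1, …, n}`, and `(r, c)` is circled iff
`ρ r + κ c > n`: up to permuting rows and columns, `C_n` is the staircase `{(u, v) | u + v > n}`.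
The solution puts at `(r, c)` the `k ∈ [1, n]` with `ρ r + κ c + k ≡ 1 (mod n)`.

Conversely, let `f` be a solution. A value on a circled cell occurs on exactly as many circled
cells as it says, and there are `1 + ⋯ + n` circled cells, so every `k ∈ [1, n]` occurs on exactly
`k` of them. At most `min (ρ r) j` circled cells of row `r` carry one of the `j` largest values,
and summing over the rows gives exactly `∑ r, min (ρ r) j` such cells; so each row attains the
bound, and for `j = ρ r` this says that the circled cells of row `r` carry the `ρ r` largest
values. Finally, by induction on `k`, the column holding `k` in row `r` has `κ` at most the
predicted value; both sides are permutations of `{1, …, n}` in `r`, so they agree.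
-/

/-- The circled set `C n` of the `n × n` Pulsar puzzle, as a predicate on cells `(r, c)`
(1-indexed).  `C 1 = {(1,1)}`, and for `n ≥ 2`, a cell `(r,c)` of the grid is circled iff
`r = 1`, or `r ≥ 2`, `c ≥ 2` and `(n - c + 1, r - 1)` is circled in `C (n-1)`. -/
def Circled : ℕ → ℕ × ℕ → Prop
  | 0, _ => False
  | 1, p => p = (1, 1)
  | (n + 2), (r, c) =>
      1 ≤ r ∧ r ≤ n + 2 ∧ 1 ≤ c ∧ c ≤ n + 2 ∧
        (r = 1 ∨ (2 ≤ r ∧ 2 ≤ c ∧ Circled (n + 1) (n + 2 - c + 1, r - 1)))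

/-- `f` is a Latin square of order `n`: on the grid of cells `(r, c)` with `1 ≤ r, c ≤ n`
it takes values in `{1, …, n}`, with distinct values on distinct cells of any one row
and on distinct cells of any one column. -/
def IsLatinSquare (n : ℕ) (f : ℕ × ℕ → ℕ) : Prop :=
  (∀ r c, 1 ≤ r → r ≤ n → 1 ≤ c → c ≤ n → 1 ≤ f (r, c) ∧ f (r, c) ≤ n) ∧
  (∀ r c₁ c₂, 1 ≤ r → r ≤ n → 1 ≤ c₁ → c₁ ≤ n → 1 ≤ c₂ → c₂ ≤ n → c₁ ≠ c₂ →
    f (r, c₁) ≠ f (r, c₂)) ∧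
  (∀ r₁ r₂ c, 1 ≤ r₁ → r₁ ≤ n → 1 ≤ r₂ → r₂ ≤ n → 1 ≤ c → c ≤ n → r₁ ≠ r₂ →
    f (r₁, c) ≠ f (r₂, c))

/-- `f` is a solution of the `n × n` Pulsar puzzle: a Latin square of order `n` such that
each circled entry equals the number of circled cells carrying that same value. -/
def IsPulsarSolution (n : ℕ) (f : ℕ × ℕ → ℕ) : Prop :=
  IsLatinSquare n f ∧
    ∀ p, Circled n p → f p = Set.ncard {q : ℕ × ℕ | Circled n q ∧ f q = f p}


open Finset

open scoped Classical

theorem sum_comp_of_bijOn {ι κ M : Type*} [AddCommMonoid M] {s : Finset ι} {t : Finset κ}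
    {e : ι → κ} (he : Set.BijOn e s t) (g : κ → M) :
    ∑ i ∈ s, g (e i) = ∑ j ∈ t, g j :=
  sum_nbij e he.mapsTo he.injOn he.surjOn fun _ _ => rfl

theorem card_filter_comp_of_bijOn {ι κ : Type*} {s : Finset ι} {t : Finset κ} {e : ι → κ}
    (he : Set.BijOn e s t) (p : κ → Prop) [DecidablePred p] :
    #{i ∈ s | p (e i)} = #{j ∈ t | p j} := by
  simp only [card_filter]
  exact sum_comp_of_bijOn he fun j => if p j then 1 else 0

theorem eqOn_of_bijOn_of_le {ι M : Type*} [AddCommMonoid M] [PartialOrder M]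
    [IsOrderedCancelAddMonoid M] {s : Finset ι} {t : Finset M} {a b : ι → M}
    (ha : Set.BijOn a s t) (hb : Set.BijOn b s t) (hle : ∀ i ∈ s, a i ≤ b i) :
    Set.EqOn a b s :=
  (sum_eq_sum_iff_of_le hle).mp <|
    (sum_comp_of_bijOn ha (id : M → M)).trans (sum_comp_of_bijOn hb id).symm

theorem bijOn_of_mapsTo_of_injOn {α : Type*} {s : Finset α} {f : α → α}
    (hmaps : Set.MapsTo f s s) (hinj : Set.InjOn f s) : Set.BijOn f s s :=
  (s.finite_toSet.injOn_iff_bijOn_of_mapsTo hmaps).mp hinj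

theorem card_filter_product {α β : Type*} (s : Finset α) (t : Finset β) (p : α × β → Prop)
    [DecidablePred p] : #{q ∈ s ×ˢ t | p q} = ∑ a ∈ s, #{b ∈ t | p (a, b)} := by
  simp only [card_filter, sum_product]

theorem sum_card_filter_and_eq {α β : Type*} [DecidableEq β] (s : Finset α) (t : Finset β)
    (p : α → Prop) [DecidablePred p] (g : α → β) :
    ∑ b ∈ t, #{a ∈ s | p a ∧ g a = b} = #{a ∈ s | p a ∧ g a ∈ t} := by
  rw [card_eq_sum_card_fiberwise (f := g) (t := t) fun a ha => (mem_filter.mp ha).2.2]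
  refine sum_congr rfl fun b hb => congrArg card ?_
  ext a
  simp only [mem_filter]
  constructor
  · rintro ⟨ha, hpa, rfl⟩
    exact ⟨⟨ha, hpa, hb⟩, rfl⟩
  · rintro ⟨⟨ha, hpa, -⟩, hab⟩
    exact ⟨ha, hpa, hab⟩

theorem card_filter_lt_add {n u : ℕ} (hu : u ≤ n) : #{v ∈ Icc 1 n | n < u + v} = u := by
  have : {v ∈ Icc 1 n | n < u + v} = Icc (n + 1 - u) n := by
    ext v
    simp only [mem_filter, mem_Icc]
    omega
  rw [this, Nat.card_Icc]
  omega

theorem sum_min_eq_sum_Icc {n j : ℕ} (hj : j ≤ n) :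
    ∑ u ∈ Icc 1 n, min u j = ∑ k ∈ Icc (n + 1 - j) n, k := by
  induction j with
  | zero => simp
  | succ j ih =>
    have hmin : ∀ u ∈ Icc 1 n, min u (j + 1) = min u j + if j < u then 1 else 0 := by
      intro u _
      split_ifs <;> omega
    have hcard : #{u ∈ Icc 1 n | j < u} = n - j := by
      rw [← card_filter_lt_add (n := n) (u := n - j) (by omega)]
      congr 1
      ext u
      simp only [mem_filter, mem_Icc]
      omega
    rw [sum_congr rfl hmin, sum_add_distrib, ih (by omega), ← card_filter, hcard,
      show n + 1 - (j + 1) = n - j by omega,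
      ← insert_Icc_add_one_left_eq_Icc (show n - j ≤ n by omega), sum_insert (by simp),
      show n - j + 1 = n + 1 - j by omega, add_comm]

section Staircase

variable {n u v k : ℕ}

/-- The entry of the solution in a row with `u` and a column with `v` circled cells: the unique
`k ∈ [1, n]` with `u + v + k ≡ 1 [MOD n]`. -/
def staircaseEntry (n u v : ℕ) : ℕ :=
  if n < u + v then 2 * n + 1 - u - v else n + 1 - u - v

theorem staircaseEntry_comm : staircaseEntry n u v = staircaseEntry n v u := by
  unfold staircaseEntry
  split_ifs <;> omega

theorem staircaseEntry_mem (hu : u ∈ Icc 1 n) (hv : v ∈ Icc 1 n) :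
    staircaseEntry n u v ∈ Icc 1 n := by
  simp only [staircaseEntry, mem_Icc] at *
  split_ifs <;> omega

theorem staircaseEntry_staircaseEntry (hu : u ∈ Icc 1 n) (hv : v ∈ Icc 1 n) :
    staircaseEntry n u (staircaseEntry n u v) = v := by
  simp only [staircaseEntry, mem_Icc] at *
  split_ifs <;> omega

theorem bijOn_staircaseEntry (hu : u ∈ Icc 1 n) :
    Set.BijOn (staircaseEntry n u) (Icc 1 n) (Icc 1 n) := by
  have hmaps : Set.MapsTo (staircaseEntry n u) (Icc 1 n) (Icc 1 n) :=
    fun _ hv => staircaseEntry_mem hu hv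
  exact Set.InvOn.bijOn ⟨fun _ hv => staircaseEntry_staircaseEntry hu hv,
    fun _ hv => staircaseEntry_staircaseEntry hu hv⟩ hmaps hmaps

theorem card_filter_lt_add_and_staircaseEntry_eq (hu : u ∈ Icc 1 n) (hk : k ∈ Icc 1 n) :
    #{v ∈ Icc 1 n | n < u + v ∧ staircaseEntry n u v = k} = if n < u + k then 1 else 0 := by
  simp only [mem_Icc] at hu hk
  split_ifs with h
  · rw [card_eq_one]
    refine ⟨2 * n + 1 - u - k, ?_⟩
    ext v
    rw [mem_filter]
    simp only [mem_Icc, mem_singleton, staircaseEntry]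
    split_ifs <;> omega
  · rw [card_eq_zero, filter_eq_empty_iff]
    simp only [mem_Icc, staircaseEntry]
    intro v hv
    split_ifs <;> omega

theorem staircaseEntry_lt (hu : u ∈ Icc 1 n) (hv : v ∈ Icc 1 n) (hk : k ∈ Icc 1 n)
    (hcirc : n < u + v → n < u + k) (hlt : staircaseEntry n u k < v) :
    staircaseEntry n u v < k := by
  simp only [staircaseEntry, mem_Icc] at *
  split_ifs at * <;> omega

end Staircase

structure IsStaircase (n : ℕ) (σ τ : ℕ → ℕ) (S : ℕ × ℕ → Prop) : Prop where
  bijOn_row : Set.BijOn σ (Icc 1 n) (Icc 1 n)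
  bijOn_col : Set.BijOn τ (Icc 1 n) (Icc 1 n)
  mem_iff : ∀ r c, S (r, c) ↔ r ∈ Icc 1 n ∧ c ∈ Icc 1 n ∧ n < σ r + τ c

def IsCountingSolution (n : ℕ) (S : ℕ × ℕ → Prop) (f : ℕ × ℕ → ℕ) : Prop :=
  IsLatinSquare n f ∧ ∀ p, S p → f p = Set.ncard {q : ℕ × ℕ | S q ∧ f q = f p}

theorem isLatinSquare_iff {n : ℕ} {f : ℕ × ℕ → ℕ} : IsLatinSquare n f ↔
    (∀ r ∈ Icc 1 n, ∀ c ∈ Icc 1 n, f (r, c) ∈ Icc 1 n) ∧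
      (∀ r ∈ Icc 1 n, Set.InjOn (fun c => f (r, c)) (Icc 1 n)) ∧
      ∀ c ∈ Icc 1 n, Set.InjOn (fun r => f (r, c)) (Icc 1 n) := by
  simp only [IsLatinSquare, Set.InjOn, coe_Icc, Set.mem_Icc, mem_Icc, and_imp, ne_eq]
  refine and_congr ?_ (and_congr ?_ ?_) <;> grind

namespace IsLatinSquare

variable {n r c k : ℕ} {f : ℕ × ℕ → ℕ} (hf : IsLatinSquare n f)
include hf

theorem mem_Icc (hr : r ∈ Icc 1 n) (hc : c ∈ Icc 1 n) : f (r, c) ∈ Icc 1 n :=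
  (isLatinSquare_iff.mp hf).1 r hr c hc

theorem injOn_row (hr : r ∈ Icc 1 n) : Set.InjOn (fun c => f (r, c)) (Icc 1 n) :=
  (isLatinSquare_iff.mp hf).2.1 r hr

theorem injOn_col (hc : c ∈ Icc 1 n) : Set.InjOn (fun r => f (r, c)) (Icc 1 n) :=
  (isLatinSquare_iff.mp hf).2.2 c hc

theorem bijOn_row (hr : r ∈ Icc 1 n) : Set.BijOn (fun c => f (r, c)) (Icc 1 n) (Icc 1 n) :=
  bijOn_of_mapsTo_of_injOn (fun _ hc => hf.mem_Icc hr hc) (hf.injOn_row hr)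

theorem exists_bijOn_eq (hk : k ∈ Icc 1 n) :
    ∃ φ : ℕ → ℕ, Set.BijOn φ (Icc 1 n) (Icc 1 n) ∧
      ∀ r ∈ Icc 1 n, f (r, φ r) = k := by
  choose! φ hφ hφk using fun r (hr : r ∈ Icc 1 n) => (hf.bijOn_row hr).surjOn hk
  refine ⟨φ, bijOn_of_mapsTo_of_injOn hφ fun r₁ hr₁ r₂ hr₂ h => ?_, hφk⟩
  refine hf.injOn_col (hφ r₂ hr₂) hr₁ hr₂ ?_
  simp only at hφk ⊢
  rw [← h, hφk r₁ hr₁, h, hφk r₂ hr₂]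

end IsLatinSquare

namespace IsStaircase

variable {n r c k : ℕ} {σ τ : ℕ → ℕ} {S : ℕ × ℕ → Prop} {f : ℕ × ℕ → ℕ}
  (hS : IsStaircase n σ τ S)
include hS

theorem ncard_eq_card_filter (p : ℕ × ℕ → Prop) [DecidablePred p] :
    {q | S q ∧ p q}.ncard = #{q ∈ Icc 1 n ×ˢ Icc 1 n | S q ∧ p q} := by
  rw [← Set.ncard_coe_finset]
  congr 1
  ext ⟨r, c⟩
  simp only [coe_filter, mem_product, Set.mem_ofPred]
  exact ⟨fun h => ⟨((hS.mem_iff r c).mp h.1).imp_right And.left, h⟩, And.right⟩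

theorem card_row (hr : r ∈ Icc 1 n) : #{c ∈ Icc 1 n | S (r, c)} = σ r := by
  have hσ := mem_Icc.mp (hS.bijOn_row.mapsTo hr)
  rw [← card_filter_lt_add hσ.2, ← card_filter_comp_of_bijOn hS.bijOn_col (n < σ r + ·)]
  congr 1
  ext c
  simp only [mem_filter, hS.mem_iff, hr, true_and, and_self_left]

theorem card_circled : #{q ∈ Icc 1 n ×ˢ Icc 1 n | S q} = ∑ k ∈ Icc 1 n, k := by
  rw [card_filter_product, sum_congr rfl fun r hr => hS.card_row hr]
  exact sum_comp_of_bijOn hS.bijOn_row id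

theorem card_value_eq (hf : IsCountingSolution n S f) (hk : k ∈ Icc 1 n) :
    #{q ∈ Icc 1 n ×ˢ Icc 1 n | S q ∧ f q = k} = k := by
  have hle : ∀ k ∈ Icc 1 n, #{q ∈ Icc 1 n ×ˢ Icc 1 n | S q ∧ f q = k} ≤ k := by
    intro k _
    obtain hempty | ⟨q, hq⟩ :=
      (filter (fun q => S q ∧ f q = k) (Icc 1 n ×ˢ Icc 1 n)).eq_empty_or_nonempty
    · simp [hempty]
    · obtain ⟨-, hSq, hfq⟩ := mem_filter.mp hq
      have := hf.2 q hSq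
      rw [hS.ncard_eq_card_filter, hfq] at this
      exact this.ge
  have hsum : ∑ k ∈ Icc 1 n, #{q ∈ Icc 1 n ×ˢ Icc 1 n | S q ∧ f q = k} =
      ∑ k ∈ Icc 1 n, k := by
    rw [sum_card_filter_and_eq, ← hS.card_circled]
    congr 1
    refine filter_congr fun q hq => and_iff_left_of_imp fun _ => ?_
    obtain ⟨hr, hc⟩ := mem_product.mp hq
    exact hf.1.mem_Icc hr hc
  exact (sum_eq_sum_iff_of_le hle).mp hsum k hk

theorem lt_add_of_isCountingSolution (hf : IsCountingSolution n S f) (hrc : S (r, c)) :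
    n < σ r + f (r, c) := by
  obtain ⟨hr, hc, -⟩ := (hS.mem_iff r c).mp hrc
  have hσ := mem_Icc.mp (hS.bijOn_row.mapsTo hr)
  obtain ⟨T, hT⟩ : ∃ T, T = Icc (n + 1 - σ r) n := ⟨_, rfl⟩
  have hle : ∀ r' ∈ Icc 1 n,
      #{c' ∈ Icc 1 n | S (r', c') ∧ f (r', c') ∈ T} ≤ min (σ r') (σ r) := by
    intro r' hr'
    refine le_min ((card_le_card fun c' hc' => ?_).trans (hS.card_row hr').le) ?_
    · simp only [mem_filter] at hc' ⊢
      exact ⟨hc'.1, hc'.2.1⟩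
    · refine (card_le_card_of_injOn (fun c' => f (r', c'))
        (fun c' hc' => (mem_filter.mp hc').2.2)
        ((hf.1.injOn_row hr').mono fun c' hc' => (mem_filter.mp hc').1)).trans ?_
      rw [hT, Nat.card_Icc]
      omega
  have hsum : ∑ r' ∈ Icc 1 n, #{c' ∈ Icc 1 n | S (r', c') ∧ f (r', c') ∈ T} =
      ∑ r' ∈ Icc 1 n, min (σ r') (σ r) := by
    have hTI : T ⊆ Icc 1 n := hT ▸ Icc_subset_Icc (by omega) le_rfl
    rw [← card_filter_product (Icc 1 n) (Icc 1 n) fun q => S q ∧ f q ∈ T,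
      ← sum_card_filter_and_eq, sum_congr rfl fun k hk => hS.card_value_eq hf (hTI hk), hT,
      ← sum_min_eq_sum_Icc hσ.2]
    exact (sum_comp_of_bijOn hS.bijOn_row (min · (σ r))).symm
  -- so every circled cell of row `r` carries one of the `σ r` largest values
  have hrow : #{c' ∈ {c' ∈ Icc 1 n | S (r, c')} | f (r, c') ∈ T} =
      #{c' ∈ Icc 1 n | S (r, c')} := by
    rw [filter_filter, hS.card_row hr, (sum_eq_sum_iff_of_le hle).mp hsum r hr, min_self]
  rw [card_filter_eq_iff, hT] at hrow
  have := mem_Icc.mp (hrow c (mem_filter.mpr ⟨hc, hrc⟩))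
  omega

theorem eq_staircaseEntry (hf : IsCountingSolution n S f) (hr : r ∈ Icc 1 n)
    (hc : c ∈ Icc 1 n) :
    f (r, c) = staircaseEntry n (σ r) (τ c) := by
  have hσ := hS.bijOn_row.mapsTo
  have hτ := hS.bijOn_col.mapsTo
  suffices key : ∀ k, ∀ r ∈ Icc 1 n, ∀ c ∈ Icc 1 n, f (r, c) = k →
      τ c = staircaseEntry n (σ r) k by
    rw [key _ r hr c hc rfl, staircaseEntry_staircaseEntry (hσ hr) (hf.1.mem_Icc hr hc)]
  intro k
  induction k using Nat.strong_induction_on with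
  | _ k ih =>
  intro r₀ hr₀ c₀ hc₀ hk₀
  have hk : k ∈ Icc 1 n := hk₀ ▸ hf.1.mem_Icc hr₀ hc₀
  obtain ⟨φ, hφbij, hφk⟩ := hf.1.exists_bijOn_eq hk
  have hφ := hφbij.mapsTo
  -- by induction, the smaller values of row `r` sit where `staircaseEntry` puts them, which
  -- leaves for `k` only columns up to the predicted one
  have hle : ∀ r ∈ Icc 1 n, τ (φ r) ≤ staircaseEntry n k (σ r) := by
    intro r hr
    rw [staircaseEntry_comm]
    by_contra! hlt
    have hcirc : n < σ r + τ (φ r) → n < σ r + k := fun h => hφk r hr ▸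
      hS.lt_add_of_isCountingSolution hf ((hS.mem_iff r (φ r)).mpr ⟨hr, hφ hr, h⟩)
    have hj := staircaseEntry_lt (hσ hr) (hτ (hφ hr)) hk hcirc hlt
    obtain ⟨c, hc, hcj : f (r, c) = _⟩ :=
      (hf.1.bijOn_row hr).surjOn (staircaseEntry_mem (hσ hr) (hτ (hφ hr)))
    have hτc := ih _ hj r hr c hc hcj
    rw [staircaseEntry_staircaseEntry (hσ hr) (hτ (hφ hr))] at hτc
    rw [hS.bijOn_col.injOn hc (hφ hr) hτc, hφk r hr] at hcj
    omega
  have hc₀ : c₀ = φ r₀ :=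
    hf.1.injOn_row hr₀ hc₀ (hφ hr₀) (hk₀.trans (hφk r₀ hr₀).symm)
  rw [hc₀, staircaseEntry_comm]
  exact eqOn_of_bijOn_of_le (hS.bijOn_col.comp hφbij) ((bijOn_staircaseEntry hk).comp hS.bijOn_row)
    hle hr₀

theorem sum_card_filter_staircaseEntry_eq (hk : k ∈ Icc 1 n) :
    ∑ r ∈ Icc 1 n, #{c ∈ Icc 1 n | S (r, c) ∧ staircaseEntry n (σ r) (τ c) = k} = k := by
  calc _ = ∑ r ∈ Icc 1 n, if n < σ r + k then 1 else 0 := by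
        refine sum_congr rfl fun r hr => ?_
        rw [← card_filter_lt_add_and_staircaseEntry_eq (hS.bijOn_row.mapsTo hr) hk,
          ← card_filter_comp_of_bijOn hS.bijOn_col
            fun v => n < σ r + v ∧ staircaseEntry n (σ r) v = k]
        congr 1
        ext c
        simp only [mem_filter, hS.mem_iff, hr, true_and, and_assoc, and_self_left]
    _ = #{u ∈ Icc 1 n | n < u + k} := by
        rw [← card_filter_comp_of_bijOn hS.bijOn_row, card_filter]
    _ = k := by
        simp only [add_comm _ k]
        exact card_filter_lt_add (mem_Icc.mp hk).2

theorem isCountingSolution_staircaseEntry :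
    IsCountingSolution n S fun p => staircaseEntry n (σ p.1) (τ p.2) := by
  have hσ := hS.bijOn_row.mapsTo
  have hτ := hS.bijOn_col.mapsTo
  refine ⟨isLatinSquare_iff.mpr ⟨fun r hr c hc => staircaseEntry_mem (hσ hr) (hτ hc),
    fun r hr => (bijOn_staircaseEntry (hσ hr)).injOn.comp hS.bijOn_col.injOn hτ,
    fun c hc r₁ hr₁ r₂ hr₂ h => ?_⟩, ?_⟩
  · refine hS.bijOn_row.injOn hr₁ hr₂
      ((bijOn_staircaseEntry (hτ hc)).injOn (hσ hr₁) (hσ hr₂) ?_)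
    simpa only [staircaseEntry_comm (v := τ c)] using h
  · rintro ⟨r, c⟩ hrc
    obtain ⟨hr, hc, -⟩ := (hS.mem_iff r c).mp hrc
    rw [hS.ncard_eq_card_filter, card_filter_product]
    exact (hS.sum_card_filter_staircaseEntry_eq (staircaseEntry_mem (hσ hr) (hτ hc))).symm

end IsStaircase

/-- `(circledCounts n).1 r` and `(circledCounts n).2 c` count the circled cells in row `r` and
column `c` of `C n`. The recursion is that of `Circled`, which turns row `r ≥ 2` into column
`r - 1` and column `c ≥ 2` into row `n - c + 1` of `C (n - 1)`. -/
def circledCounts : ℕ → (ℕ → ℕ) × (ℕ → ℕ)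
  | 0 => (fun _ => 0, fun _ => 0)
  | n + 1 => (fun r => if r = 1 then n + 1 else (circledCounts n).2 (r - 1),
      fun c => if c = 1 then 1 else 1 + (circledCounts n).1 (n + 2 - c))

theorem bijOn_circledCounts_fst_succ {n : ℕ}
    (hcol : Set.BijOn (circledCounts n).2 (Icc 1 n) (Icc 1 n)) :
    Set.BijOn (circledCounts (n + 1)).1 (Icc 1 (n + 1)) (Icc 1 (n + 1)) := by
  have hcolI : ∀ c ∈ Icc 1 n, 1 ≤ (circledCounts n).2 c ∧ (circledCounts n).2 c ≤ n :=
    fun c hc => mem_Icc.mp (hcol.mapsTo hc)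
  refine bijOn_of_mapsTo_of_injOn (fun r hr => ?_) fun r₁ hr₁ r₂ hr₂ h => ?_
  · simp only [coe_Icc, Set.mem_Icc, circledCounts] at hr ⊢
    split_ifs
    · omega
    · have := hcolI (r - 1) (by rw [mem_Icc]; omega)
      omega
  · simp only [coe_Icc, Set.mem_Icc, circledCounts] at hr₁ hr₂ h
    have hr₁' : r₁ ≠ 1 → r₁ - 1 ∈ Icc 1 n := by rw [mem_Icc]; omega
    have hr₂' : r₂ ≠ 1 → r₂ - 1 ∈ Icc 1 n := by rw [mem_Icc]; omega
    split_ifs at h with h₁ h₂ h₂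
    · omega
    · have := hcolI _ (hr₂' h₂)
      omega
    · have := hcolI _ (hr₁' h₁)
      omega
    · have := hcol.injOn (hr₁' h₁) (hr₂' h₂) h
      omega

theorem bijOn_circledCounts_snd_succ {n : ℕ}
    (hrow : Set.BijOn (circledCounts n).1 (Icc 1 n) (Icc 1 n)) :
    Set.BijOn (circledCounts (n + 1)).2 (Icc 1 (n + 1)) (Icc 1 (n + 1)) := by
  have hrowI : ∀ r ∈ Icc 1 n, 1 ≤ (circledCounts n).1 r ∧ (circledCounts n).1 r ≤ n :=
    fun r hr => mem_Icc.mp (hrow.mapsTo hr)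
  refine bijOn_of_mapsTo_of_injOn (fun c hc => ?_) fun c₁ hc₁ c₂ hc₂ h => ?_
  · simp only [coe_Icc, Set.mem_Icc, circledCounts] at hc ⊢
    split_ifs
    · omega
    · have := hrowI (n + 2 - c) (by rw [mem_Icc]; omega)
      omega
  · simp only [coe_Icc, Set.mem_Icc, circledCounts] at hc₁ hc₂ h
    have hc₁' : c₁ ≠ 1 → n + 2 - c₁ ∈ Icc 1 n := by rw [mem_Icc]; omega
    have hc₂' : c₂ ≠ 1 → n + 2 - c₂ ∈ Icc 1 n := by rw [mem_Icc]; omega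
    split_ifs at h with h₁ h₂ h₂
    · omega
    · have := hrowI _ (hc₂' h₂)
      omega
    · have := hrowI _ (hc₁' h₁)
      omega
    · have := hrow.injOn (hc₁' h₁) (hc₂' h₂) (by omega)
      omega

theorem bijOn_circledCounts : ∀ n, Set.BijOn (circledCounts n).1 (Icc 1 n) (Icc 1 n) ∧
    Set.BijOn (circledCounts n).2 (Icc 1 n) (Icc 1 n)
  | 0 => by simp
  | n + 1 => ⟨bijOn_circledCounts_fst_succ (bijOn_circledCounts n).2,
      bijOn_circledCounts_snd_succ (bijOn_circledCounts n).1⟩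

theorem circled_iff : ∀ n r c, Circled n (r, c) ↔
    r ∈ Icc 1 n ∧ c ∈ Icc 1 n ∧ n < (circledCounts n).1 r + (circledCounts n).2 c
  | 0, r, c => by simp [Circled]
  | 1, r, c => by
    simp only [Circled, circledCounts, Prod.mk.injEq, mem_Icc]
    split_ifs <;> omega
  | n + 2, r, c => by
    have hrow : (circledCounts (n + 2)).1 r =
        if r = 1 then n + 2 else (circledCounts (n + 1)).2 (r - 1) := rfl
    have hcol : (circledCounts (n + 2)).2 c =
        if c = 1 then 1 else 1 + (circledCounts (n + 1)).1 (n + 3 - c) := rfl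
    rw [Circled, circled_iff (n + 1), hrow, hcol]
    simp only [mem_Icc]
    split_ifs with hr hc hc
    · omega
    · omega
    · by_cases hr' : r - 1 ∈ Icc 1 (n + 1)
      · have := mem_Icc.mp ((bijOn_circledCounts (n + 1)).2.mapsTo hr')
        omega
      · rw [mem_Icc] at hr'
        omega
    · rcases Nat.lt_or_ge (n + 2) c with hc' | hc'
      · omega
      · rw [show n + 3 - c = n + 2 - c + 1 by omega]
        omega

theorem isStaircase_circled (n : ℕ) :
    IsStaircase n (circledCounts n).1 (circledCounts n).2 (Circled n) :=
  ⟨(bijOn_circledCounts n).1, (bijOn_circledCounts n).2, circled_iff n⟩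

theorem pulsar_puzzle_unique_solution_general (n : ℕ) :
    ∃ f : ℕ × ℕ → ℕ, IsPulsarSolution n f ∧
      ∀ g : ℕ × ℕ → ℕ, IsPulsarSolution n g →
        ∀ r c, 1 ≤ r → r ≤ n → 1 ≤ c → c ≤ n → g (r, c) = f (r, c) := by
  have hS := isStaircase_circled n
  refine ⟨fun p => staircaseEntry n ((circledCounts n).1 p.1) ((circledCounts n).2 p.2),
    hS.isCountingSolution_staircaseEntry, fun g hg r c hr₁ hr₂ hc₁ hc₂ => ?_⟩
  exact hS.eq_staircaseEntry hg (mem_Icc.mpr ⟨hr₁, hr₂⟩) (mem_Icc.mpr ⟨hc₁, hc₂⟩)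

/-- For every `n ≥ 1` the `n × n` Pulsar puzzle has exactly one solution: there is a
solution, and any two solutions agree on every cell of the grid. -/
theorem pulsar_puzzle_unique_solution (n : ℕ) (hn : 1 ≤ n) :
    ∃ f : ℕ × ℕ → ℕ, IsPulsarSolution n f ∧
      ∀ g : ℕ × ℕ → ℕ, IsPulsarSolution n g →
        ∀ r c, 1 ≤ r → r ≤ n → 1 ≤ c → c ≤ n → g (r, c) = f (r, c) :=
  pulsar_puzzle_unique_solution_general n
end

section
/- Let n ≥ 1 and let S_1, …, S_n be pairwise disjoint finite sets with |S_i| = i for each i. Let f be a function on the union S = S_1 ∪ … ∪ S_n with values in {1,…,n}, injective on each S_i, and suppose that for every k ∈ {1,…,n} exactly k elements of S have value k. Then for each i ∈ {1,…,n}, the image f(S_i) equals {n−i+1, n−i+2, …, n}; in particular each S_i contains exactly one element of each of the values n−i+1 through n. -/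
/-- Pairwise disjoint pieces `S 1, …, S n` of sizes `1, …, n`, with `f` valued in
`{1, …, n}`, injective on each piece, and with exactly `k` elements of value `k`
overall, force the image of `S i` under `f` to be `{n - i + 1, …, n}`; in particular
each piece contains exactly one element of each of these values. -/
theorem pieces_values {α : Type*} [DecidableEq α] (n : ℕ) (hn : 1 ≤ n)
    (S : ℕ → Finset α) (f : α → ℕ)
    (hdisj : ∀ i ∈ Finset.Icc 1 n, ∀ j ∈ Finset.Icc 1 n, i ≠ j → Disjoint (S i) (S j))
    (hcard : ∀ i ∈ Finset.Icc 1 n, (S i).card = i)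
    (hrange : ∀ i ∈ Finset.Icc 1 n, ∀ x ∈ S i, f x ∈ Finset.Icc 1 n)
    (hinj : ∀ i ∈ Finset.Icc 1 n, ∀ x ∈ S i, ∀ y ∈ S i, f x = f y → x = y)
    (hcount : ∀ k ∈ Finset.Icc 1 n,
      (((Finset.Icc 1 n).biUnion S).filter fun x => f x = k).card = k) :
    ∀ i ∈ Finset.Icc 1 n, (S i).image f = Finset.Icc (n - i + 1) n ∧
      ∀ k ∈ Finset.Icc (n - i + 1) n, ((S i).filter fun x => f x = k).card = 1 := by
  classical
  have hc1 : ∀ i ∈ Finset.Icc 1 n, ∀ k, ((S i).filter fun x => f x = k).card ≤ 1 := by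
    intro i hi k
    apply Finset.card_le_one.mpr
    intro a ha b hb
    simp only [Finset.mem_filter] at ha hb
    exact hinj i hi a ha.1 b hb.1 (ha.2.trans hb.2.symm)
  have hrow : ∀ i ∈ Finset.Icc 1 n,
      ∑ k ∈ Finset.Icc 1 n, ((S i).filter fun x => f x = k).card = i := by
    intro i hi
    have h := Finset.card_eq_sum_card_fiberwise (fun x hx => hrange i hi x hx)
    rw [hcard i hi] at h
    exact h.symm
  have hcol : ∀ k ∈ Finset.Icc 1 n,
      ∑ i ∈ Finset.Icc 1 n, ((S i).filter fun x => f x = k).card = k := by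
    intro k hk
    have h := hcount k hk
    rw [Finset.filter_biUnion, Finset.card_biUnion
      (fun i hi j hj hij => Finset.disjoint_filter_filter (hdisj i hi j hj hij))] at h
    exact h
  have key : ∀ m : ℕ, ∀ k, 1 ≤ k → k ≤ n → n - k = m →
      ∀ i ∈ Finset.Icc 1 n,
        ((S i).filter fun x => f x = k).card = if n + 1 ≤ i + k then 1 else 0 := by
    intro m
    induction m using Nat.strong_induction_on with
    | _ m IH =>
      intro k hk1 hkn hm
      have hzero : ∀ i ∈ Finset.Icc 1 n, i + k ≤ n →
          ((S i).filter fun x => f x = k).card = 0 := by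
        intro i hi hik
        have hi' := Finset.mem_Icc.mp hi
        have hsumhigh : ∑ j ∈ Finset.Icc (k+1) n,
            ((S i).filter fun x => f x = j).card = i := by
          have h1 : ∀ j ∈ Finset.Icc (k+1) n,
              ((S i).filter fun x => f x = j).card = if n + 1 ≤ i + j then 1 else 0 := by
            intro j hj
            have hj' := Finset.mem_Icc.mp hj
            exact IH (n - j) (by omega) j (by omega) (by omega) rfl i hi
          rw [Finset.sum_congr rfl h1, Finset.sum_ite, Finset.sum_const,
            Finset.sum_const_zero, add_zero, smul_eq_mul, mul_one]
          have : (Finset.Icc (k+1) n).filter (fun j => n + 1 ≤ i + j)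
              = Finset.Icc (n + 1 - i) n := by
            ext j
            simp only [Finset.mem_filter, Finset.mem_Icc]
            omega
          rw [this, Nat.card_Icc]
          omega
        have hsplit : Finset.Icc 1 n = Finset.Icc 1 k ∪ Finset.Icc (k+1) n := by
          ext j; simp only [Finset.mem_union, Finset.mem_Icc]; omega
        have hdisj2 : Disjoint (Finset.Icc 1 k) (Finset.Icc (k+1) n) := by
          rw [Finset.disjoint_left]
          intro a ha hb
          simp only [Finset.mem_Icc] at ha hb
          omega
        have htot := hrow i hi
        rw [hsplit, Finset.sum_union hdisj2, hsumhigh] at htot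
        have hlow : ∑ j ∈ Finset.Icc 1 k, ((S i).filter fun x => f x = j).card = 0 := by
          omega
        exact (Finset.sum_eq_zero_iff.mp hlow) k (Finset.mem_Icc.mpr ⟨hk1, le_refl k⟩)
      intro i hi
      have hi' := Finset.mem_Icc.mp hi
      by_cases hik : n + 1 ≤ i + k
      · rw [if_pos hik]
        have htot := hcol k (Finset.mem_Icc.mpr ⟨hk1, hkn⟩)
        have hsplit : Finset.Icc 1 n = Finset.Icc 1 (n - k) ∪ Finset.Icc (n - k + 1) n := by
          ext j; simp only [Finset.mem_union, Finset.mem_Icc]; omega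
        have hdisj2 : Disjoint (Finset.Icc 1 (n - k)) (Finset.Icc (n - k + 1) n) := by
          rw [Finset.disjoint_left]
          intro a ha hb
          simp only [Finset.mem_Icc] at ha hb
          omega
        rw [hsplit, Finset.sum_union hdisj2] at htot
        have hlow : ∑ j ∈ Finset.Icc 1 (n - k), ((S j).filter fun x => f x = k).card = 0 := by
          apply Finset.sum_eq_zero
          intro j hj
          have hj' := Finset.mem_Icc.mp hj
          exact hzero j (Finset.mem_Icc.mpr ⟨hj'.1, by omega⟩) (by omega)
        rw [hlow, zero_add] at htot
        -- high sum equals k, over k terms each ≤ 1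
        by_contra hne
        have hle := hc1 i hi k
        have hz : ((S i).filter fun x => f x = k).card = 0 := by omega
        have himem : i ∈ Finset.Icc (n - k + 1) n := Finset.mem_Icc.mpr ⟨by omega, hi'.2⟩
        have herase : ∑ j ∈ (Finset.Icc (n - k + 1) n).erase i,
            ((S j).filter fun x => f x = k).card
            ≤ ((Finset.Icc (n - k + 1) n).erase i).card • 1 := by
          apply Finset.sum_le_card_nsmul
          intro j hj
          exact hc1 j (Finset.mem_Icc.mpr (by
            have := Finset.mem_Icc.mp (Finset.mem_of_mem_erase hj)
            omega)) k
        rw [← Finset.add_sum_erase _ _ himem, hz, zero_add] at htot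
        rw [Finset.card_erase_of_mem himem, Nat.card_Icc, smul_eq_mul, mul_one] at herase
        omega
      · rw [if_neg hik]
        exact hzero i hi (by omega)
  intro i hi
  have hi' := Finset.mem_Icc.mp hi
  have hkey : ∀ k, 1 ≤ k → k ≤ n →
      ((S i).filter fun x => f x = k).card = if n + 1 ≤ i + k then 1 else 0 :=
    fun k h1 h2 => key (n - k) k h1 h2 rfl i hi
  constructor
  · ext k
    simp only [Finset.mem_image, Finset.mem_Icc]
    constructor
    · rintro ⟨x, hx, rfl⟩
      have hr := Finset.mem_Icc.mp (hrange i hi x hx)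
      have hck : 1 ≤ ((S i).filter fun y => f y = f x).card :=
        Finset.card_pos.mpr ⟨x, Finset.mem_filter.mpr ⟨hx, rfl⟩⟩
      have hfe := hkey (f x) hr.1 hr.2
      refine ⟨?_, hr.2⟩
      by_contra h
      rw [if_neg (by omega)] at hfe
      omega
    · rintro ⟨h1, h2⟩
      have hck := hkey k (by omega) h2
      rw [if_pos (by omega)] at hck
      obtain ⟨x, hx⟩ := Finset.card_pos.mp (by omega : 0 < ((S i).filter fun x => f x = k).card)
      simp only [Finset.mem_filter] at hx
      exact ⟨x, hx.1, hx.2⟩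
  · intro k hk
    have hk' := Finset.mem_Icc.mp hk
    have := hkey k (by omega) hk'.2
    rwa [if_pos (by omega)] at this
end

section
/- For every n ≥ 1, the circled set C_n has exactly n(n+1)/2 elements; consequently exactly n(n−1)/2 cells of the n×n grid are not in C_n. -/
lemma circled_mem_grid (n : ℕ) (p : ℕ × ℕ) (h : Circled n p) :
    1 ≤ p.1 ∧ p.1 ≤ n ∧ 1 ≤ p.2 ∧ p.2 ≤ n := by
  match n, p with
  | 0, p => exact h.elim
  | 1, p => simp only [Circled] at h; simp [h]
  | n + 2, (r, c) => exact ⟨h.1, h.2.1, h.2.2.1, h.2.2.2.1⟩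

lemma circled_finite (n : ℕ) : {p : ℕ × ℕ | Circled n p}.Finite := by
  apply Set.Finite.subset (Set.finite_Icc (1, 1) (n, n))
  intro p hp
  have h := circled_mem_grid n p hp
  simp only [Set.mem_Icc, Prod.le_def]
  exact ⟨⟨h.1, h.2.2.1⟩, ⟨h.2.1, h.2.2.2⟩⟩

lemma circled_succ (n : ℕ) :
    {p : ℕ × ℕ | Circled (n + 2) p} =
      ((fun c => ((1 : ℕ), c)) '' Set.Icc 1 (n + 2)) ∪
      ((fun q : ℕ × ℕ => (q.2 + 1, n + 3 - q.1)) '' {p | Circled (n + 1) p}) := by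
  ext ⟨r, c⟩
  simp only [Set.mem_setOf_eq, Set.mem_union, Set.mem_image, Set.mem_Icc]
  constructor
  · rintro ⟨h1, h2, h3, h4, h5 | ⟨h6, h7, h8⟩⟩
    · exact Or.inl ⟨c, ⟨h3, h4⟩, by simp [h5]⟩
    · refine Or.inr ⟨(n + 2 - c + 1, r - 1), h8, ?_⟩
      have hb := circled_mem_grid (n + 1) _ h8
      simp only [Prod.mk.injEq] at hb ⊢
      omega
  · rintro (⟨x, ⟨hx1, hx2⟩, he⟩ | ⟨⟨a, b⟩, hq, he⟩)
    · cases he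
      exact ⟨le_refl 1, by omega, hx1, hx2, Or.inl rfl⟩
    · have hb := circled_mem_grid (n + 1) (a, b) hq
      simp only at hb
      cases he
      have hpair : ((n + 2 - (n + 3 - a) + 1 : ℕ), (b + 1 - 1 : ℕ)) = (a, b) := by
        simp only [Prod.mk.injEq]; omega
      refine ⟨by omega, by omega, by omega, by omega,
        Or.inr ⟨by omega, by omega, ?_⟩⟩
      rw [hpair]; exact hq

lemma circled_card_aux : ∀ n, 1 ≤ n →
    Set.ncard {p : ℕ × ℕ | Circled n p} = n * (n + 1) / 2 := by
  intro n
  induction n with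
  | zero => omega
  | succ m ih =>
    intro _
    match m, ih with
    | 0, _ =>
      have : {p : ℕ × ℕ | Circled 1 p} = {((1 : ℕ), (1 : ℕ))} := by
        ext p; simp [Circled]
      rw [this, Set.ncard_singleton]
    | k + 1, ih =>
      have hrec := circled_succ k
      have hIH := ih (by omega)
      have hrow : ((fun c => ((1 : ℕ), c)) '' Set.Icc 1 (k + 2)).ncard = k + 2 := by
        rw [Set.ncard_image_of_injective _ (fun a b h => (Prod.mk.injEq .. ▸ h).2)]
        rw [← Finset.coe_Icc, Set.ncard_coe_finset, Nat.card_Icc]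
        omega
      have himg : ((fun q : ℕ × ℕ => (q.2 + 1, k + 3 - q.1)) ''
          {p | Circled (k + 1) p}).ncard = (k + 1) * (k + 1 + 1) / 2 := by
        rw [Set.ncard_image_of_injOn, hIH]
        intro ⟨a, b⟩ ha ⟨a', b'⟩ ha' h
        have h1 := circled_mem_grid (k + 1) (a, b) ha
        have h2 := circled_mem_grid (k + 1) (a', b') ha'
        simp only [Prod.mk.injEq] at h ⊢
        simp only at h1 h2
        omega
      have hdisj : Disjoint ((fun c => ((1 : ℕ), c)) '' Set.Icc 1 (k + 2))
          ((fun q : ℕ × ℕ => (q.2 + 1, k + 3 - q.1)) '' {p | Circled (k + 1) p}) := by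
        rw [Set.disjoint_left]
        rintro p ⟨x, _, hx⟩ ⟨q, hqS, hq⟩
        rw [← hx] at hq
        have hb := circled_mem_grid (k + 1) q hqS
        have := (Prod.mk.injEq .. ▸ hq).1
        omega
      rw [show k + 1 + 1 = k + 2 from rfl, hrec,
        Set.ncard_union_eq hdisj ((Set.finite_Icc _ _).image _)
          ((circled_finite (k + 1)).image _), hrow, himg]
      obtain ⟨t1, ht1⟩ := Nat.even_mul_succ_self (k + 1)
      obtain ⟨t2, ht2⟩ := Nat.even_mul_succ_self (k + 2)
      have e1 : (k + 2) * (k + 2 + 1) = (k + 1) * (k + 1 + 1) + 2 * (k + 2) := by ring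
      omega

/-- The circled set `C n` has exactly `n * (n+1) / 2` elements, and hence exactly
`n * (n-1) / 2` cells of the `n × n` grid are uncircled. -/
theorem circled_card (n : ℕ) (hn : 1 ≤ n) :
    Set.ncard {p : ℕ × ℕ | Circled n p} = n * (n + 1) / 2 ∧
    Set.ncard {p : ℕ × ℕ |
        (1 ≤ p.1 ∧ p.1 ≤ n ∧ 1 ≤ p.2 ∧ p.2 ≤ n) ∧ ¬ Circled n p} = n * (n - 1) / 2 := by
  have h1 := circled_card_aux n hn
  refine ⟨h1, ?_⟩
  have hgrid : {p : ℕ × ℕ | 1 ≤ p.1 ∧ p.1 ≤ n ∧ 1 ≤ p.2 ∧ p.2 ≤ n} =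
      ↑(Finset.Icc 1 n ×ˢ Finset.Icc 1 n) := by
    ext ⟨r, c⟩
    simp only [Set.mem_setOf_eq, Finset.coe_product, Set.mem_prod, Finset.mem_coe,
      Finset.mem_Icc]
    tauto
  have hgc : {p : ℕ × ℕ | 1 ≤ p.1 ∧ p.1 ≤ n ∧ 1 ≤ p.2 ∧ p.2 ≤ n}.ncard = n * n := by
    rw [hgrid, Set.ncard_coe_finset, Finset.card_product, Nat.card_Icc]
    simp
  have hsub : {p : ℕ × ℕ | Circled n p} ⊆
      {p : ℕ × ℕ | 1 ≤ p.1 ∧ p.1 ≤ n ∧ 1 ≤ p.2 ∧ p.2 ≤ n} :=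
    fun p hp => circled_mem_grid n p hp
  have hfin : {p : ℕ × ℕ | 1 ≤ p.1 ∧ p.1 ≤ n ∧ 1 ≤ p.2 ∧ p.2 ≤ n}.Finite := by
    rw [hgrid]; exact (Finset.Icc 1 n ×ˢ Finset.Icc 1 n).finite_toSet
  have hdiff : {p : ℕ × ℕ | (1 ≤ p.1 ∧ p.1 ≤ n ∧ 1 ≤ p.2 ∧ p.2 ≤ n) ∧ ¬ Circled n p} =
      {p : ℕ × ℕ | 1 ≤ p.1 ∧ p.1 ≤ n ∧ 1 ≤ p.2 ∧ p.2 ≤ n} \ {p : ℕ × ℕ | Circled n p} := by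
    ext p; simp [Set.mem_diff]
  rw [hdiff, Set.ncard_diff hsub (circled_finite n), hgc, h1]
  obtain ⟨m, rfl⟩ := Nat.exists_eq_add_of_le hn
  have e1 : (1 + m) * (1 + m + 1) = m * m + 3 * m + 2 := by ring
  have e2 : (1 + m) * (1 + m) = m * m + 2 * m + 1 := by ring
  have e3 : (1 + m) * (1 + m - 1) = m * m + m := by
    rw [show 1 + m - 1 = m from by omega]; ring
  have e0 : m * (m + 1) = m * m + m := by ring
  obtain ⟨t, ht⟩ := Nat.even_mul_succ_self m
  rw [e1, e2, e3]
  omega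
end

section
/- For every n ≥ 1 and every column index i with 1 ≤ i ≤ n, the number of cells of C_n in column i plus the number of cells of C_n in column n+1−i equals n+1; equivalently, the number of cells of C_n in column i equals one plus the number of cells in column n+1−i that are not in C_n. -/
lemma circled_bounds : ∀ n r c, Circled n (r, c) → 1 ≤ r ∧ r ≤ n ∧ 1 ≤ c ∧ c ≤ n := by
  intro n r c h
  match n with
  | 0 => exact absurd h id
  | 1 => simp only [Circled, Prod.mk.injEq] at h; omega
  | (m+2) => obtain ⟨a,b,d,e,-⟩ := h; exact ⟨a,b,d,e⟩

lemma circled_key (n r c : ℕ) :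
    Circled (n+2) (r, c) ↔
      (r = 1 ∧ 1 ≤ c ∧ c ≤ n+2) ∨
      (2 ≤ r ∧ r ≤ n+2 ∧ c = n+2) ∨
      (3 ≤ r ∧ r ≤ n+2 ∧ 2 ≤ c ∧ c ≤ n+1 ∧ Circled n (n+3-r, n+2-c)) := by
  match n with
  | 0 =>
    simp only [Circled, Prod.mk.injEq]
    constructor
    · rintro ⟨h1,h2,h3,h4,h5|⟨h5,h6,h7,h8⟩⟩
      · left; exact ⟨h5,h3,h4⟩
      · right; left; omega
    · rintro (⟨h1,h2,h3⟩|⟨h1,h2,h3⟩|⟨h1,h2,-⟩)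
      · exact ⟨by omega, by omega, h2, h3, Or.inl h1⟩
      · exact ⟨by omega, h2, by omega, by omega, Or.inr ⟨h1, by omega, by omega, by omega⟩⟩
      · omega
  | (m+1) =>
    show (1 ≤ r ∧ r ≤ m+3 ∧ 1 ≤ c ∧ c ≤ m+3 ∧
        (r = 1 ∨ (2 ≤ r ∧ 2 ≤ c ∧ Circled (m+2) (m+3-c+1, r-1)))) ↔ _
    constructor
    · rintro ⟨h1,h2,h3,h4,h5|⟨h5,h6,h7⟩⟩
      · left; exact ⟨h5,h3,h4⟩
      · obtain ⟨b1,b2,b3,b4,hd⟩ := h7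
        rcases hd with he | ⟨e1,e2,e3⟩
        · right; left; omega
        · right; right
          refine ⟨by omega, by omega, by omega, by omega, ?_⟩
          have : m+2-(r-1)+1 = m+4-r := by omega
          have h2' : m+3-c+1-1 = m+3-c := by omega
          rw [this, h2'] at e3
          convert e3 using 2 <;> omega
    · rintro (⟨h1,h2,h3⟩|⟨h1,h2,h3⟩|⟨h1,h2,h3,h4,h5⟩)
      · exact ⟨by omega, by omega, h2, h3, Or.inl h1⟩
      · refine ⟨by omega, h2, by omega, by omega, Or.inr ⟨h1, by omega, ?_⟩⟩
        subst h3
        have : m+3-(m+3)+1 = 1 := by omega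
        rw [this]
        exact ⟨by omega, by omega, by omega, by omega, Or.inl rfl⟩
      · refine ⟨by omega, by omega, by omega, by omega,
          Or.inr ⟨by omega, by omega, ?_⟩⟩
        refine ⟨by omega, by omega, by omega, by omega, Or.inr ⟨by omega, by omega, ?_⟩⟩
        have e1 : m+3-c+1 = m+4-c := by omega
        have e2 : m+2-(r-1)+1 = m+4-r := by omega
        have e3 : m+4-c-1 = m+3-c := by omega
        rw [e2]
        convert h5 using 2 <;> omega

lemma colFinite (n c : ℕ) : {r : ℕ | Circled n (r, c)}.Finite :=
  (Set.finite_Icc 1 n).subset (fun r hr => by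
    have := circled_bounds n r c hr; exact Set.mem_Icc.2 ⟨this.1, this.2.1⟩)

lemma ncard_Icc_one (n : ℕ) : (Set.Icc 1 n).ncard = n := by
  rw [Set.ncard_eq_toFinset_card', Set.toFinset_Icc, Nat.card_Icc, Nat.add_sub_cancel]

lemma colCard_le (n c : ℕ) : Set.ncard {r : ℕ | Circled n (r, c)} ≤ n := by
  have h := Set.ncard_le_ncard (t := Set.Icc 1 n)
    (fun r hr => by have := circled_bounds n r c hr; exact Set.mem_Icc.2 ⟨this.1, this.2.1⟩)
    (Set.finite_Icc 1 n)
  rwa [ncard_Icc_one] at h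

lemma colCard_one (n : ℕ) : Set.ncard {r : ℕ | Circled (n+2) (r, 1)} = 1 := by
  have : {r : ℕ | Circled (n+2) (r, 1)} = {1} := by
    ext r
    rw [Set.mem_setOf_eq, circled_key]
    simp only [Set.mem_singleton_iff]
    constructor
    · rintro (h|h|h) <;> omega
    · intro h; left; omega
  rw [this, Set.ncard_singleton]

lemma colCard_last (n : ℕ) : Set.ncard {r : ℕ | Circled (n+2) (r, n+2)} = n+2 := by
  have : {r : ℕ | Circled (n+2) (r, n+2)} = Set.Icc 1 (n+2) := by
    ext r
    rw [Set.mem_setOf_eq, circled_key, Set.mem_Icc]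
    constructor
    · rintro (h|h|h) <;> omega
    · intro h
      rcases Nat.eq_or_lt_of_le h.1 with h1 | h1
      · left; omega
      · right; left; omega
  rw [this, ncard_Icc_one]

lemma colCard_step (n c : ℕ) (h2 : 2 ≤ c) (h3 : c ≤ n+1) :
    Set.ncard {r : ℕ | Circled (n+2) (r, c)} =
      1 + Set.ncard {r : ℕ | Circled n (r, n+2-c)} := by
  have hset : {r : ℕ | Circled (n+2) (r, c)}
      = insert 1 ((fun R => n+3-R) '' {R : ℕ | Circled n (R, n+2-c)}) := by
    ext r
    rw [Set.mem_setOf_eq, circled_key, Set.mem_insert_iff, Set.mem_image]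
    constructor
    · rintro (h|h|⟨a1,a2,a3,a4,a5⟩)
      · left; omega
      · omega
      · right
        exact ⟨n+3-r, a5, by omega⟩
    · rintro (h|⟨R, hR, hRr⟩)
      · left; omega
      · have hb := circled_bounds n R (n+2-c) hR
        right; right
        refine ⟨by omega, by omega, h2, h3, ?_⟩
        have : n+3-r = R := by omega
        rwa [this]
  rw [hset]
  have hinj : Set.InjOn (fun R => n+3-R) {R : ℕ | Circled n (R, n+2-c)} := by
    intro a ha b hb hab
    have h1 := circled_bounds n a (n+2-c) ha
    have h2 := circled_bounds n b (n+2-c) hb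
    simp only at hab
    omega
  have hnot : (1 : ℕ) ∉ (fun R => n+3-R) '' {R : ℕ | Circled n (R, n+2-c)} := by
    rintro ⟨R, hR, hRr⟩
    have h1 : n+3-R = 1 := hRr
    have := circled_bounds n R (n+2-c) hR
    omega
  rw [Set.ncard_insert_of_notMem hnot (((colFinite n (n+2-c)).image _)),
    Set.ncard_image_of_injOn hinj]
  omega

theorem main1 : ∀ n i, 1 ≤ i → i ≤ n →
    Set.ncard {r : ℕ | Circled n (r, i)} +
      Set.ncard {r : ℕ | Circled n (r, n + 1 - i)} = n + 1
  | 0, i, h1, h2 => by omega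
  | 1, i, h1, h2 => by
    have hi : i = 1 := by omega
    subst hi
    have : {r : ℕ | Circled 1 (r, 1)} = {1} := by
      ext r; simp [Circled, Prod.ext_iff]
    simp only [show (1+1-1 : ℕ) = 1 from rfl, this, Set.ncard_singleton]
  | 2, i, h1, h2 => by
    have c1 : Set.ncard {r : ℕ | Circled 2 (r, 1)} = 1 := colCard_one 0
    have c2 : Set.ncard {r : ℕ | Circled 2 (r, 2)} = 2 := colCard_last 0
    interval_cases i
    · simpa [show (2+1-1 : ℕ) = 2 from rfl] using by rw [c1, c2]
    · simpa [show (2+1-2 : ℕ) = 1 from rfl] using by rw [c1, c2]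
  | (n+3), i, h1, h2 => by
    rcases eq_or_ne i 1 with rfl | hi1
    · rw [show n+3+1-1 = n+3 from rfl, colCard_one (n+1), colCard_last (n+1)]
      omega
    rcases eq_or_ne i (n+3) with rfl | hin
    · rw [show n+3+1-(n+3) = 1 by omega, colCard_one (n+1), colCard_last (n+1)]
    · have hi2 : 2 ≤ i := by omega
      have hi3 : i ≤ n+2 := by omega
      have e1 := colCard_step (n+1) i hi2 hi3
      have e2 := colCard_step (n+1) (n+4-i) (by omega) (by omega)
      have ih := main1 (n+1) (i-1) (by omega) (by omega)
      rw [show n+3+1-i = n+4-i by omega, e1, e2,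
        show n+1+2-(n+4-i) = i-1 by omega, show n+1+2-i = n+3-i by omega]
      rw [show n+1+1-(i-1) = n+3-i by omega] at ih
      omega


/-- For each column `i`, the number of circled cells in column `i` plus the number of
circled cells in column `n + 1 - i` equals `n + 1`; equivalently, the number of circled
cells in column `i` is one plus the number of uncircled cells in column `n + 1 - i`. -/
theorem circled_column_symmetry (n : ℕ) (hn : 1 ≤ n) (i : ℕ) (hi1 : 1 ≤ i) (hi2 : i ≤ n) :
    Set.ncard {r : ℕ | Circled n (r, i)} +
      Set.ncard {r : ℕ | Circled n (r, n + 1 - i)} = n + 1 ∧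
    Set.ncard {r : ℕ | Circled n (r, i)} =
      Set.ncard {r : ℕ | 1 ≤ r ∧ r ≤ n ∧ ¬ Circled n (r, n + 1 - i)} + 1 := by
  have h1 := main1 n i hi1 hi2
  refine ⟨h1, ?_⟩
  set j := n + 1 - i with hj
  have hsub : {r : ℕ | Circled n (r, j)} ⊆ Set.Icc 1 n := fun r hr => by
    have := circled_bounds n r j hr; exact Set.mem_Icc.2 ⟨this.1, this.2.1⟩
  have hset : {r : ℕ | 1 ≤ r ∧ r ≤ n ∧ ¬ Circled n (r, j)}
      = Set.Icc 1 n \ {r : ℕ | Circled n (r, j)} := by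
    ext r; simp only [Set.mem_setOf_eq, Set.mem_diff, Set.mem_Icc]; tauto
  rw [hset, Set.ncard_diff hsub (colFinite n j), ncard_Icc_one]
  have := colCard_le n j
  omega
end

section
/- For every n ≥ 2 the circled set C_n has the following structure: (i) every cell (r,n) of the last column (1 ≤ r ≤ n) belongs to C_n; (ii) for 2 ≤ r ≤ n the cell (r,1) does not belong to C_n; and (iii) for all r, c with 2 ≤ r ≤ n and 1 ≤ c ≤ n−1, the cell (r,c) does not belong to C_n if and only if (c, n−r+1) belongs to C_{n−1}. -/
lemma circled_succ_succ (k r c : ℕ) : Circled (k+2) (r,c) ↔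
    (1 ≤ r ∧ r ≤ k+2 ∧ 1 ≤ c ∧ c ≤ k+2 ∧
      (r = 1 ∨ (2 ≤ r ∧ 2 ≤ c ∧ Circled (k+1) (k+2-c+1, r-1)))) := Iff.rfl

lemma circled_row1 : ∀ m c, 1 ≤ c → c ≤ m → Circled m (1, c) := by
  intro m c h1 h2
  match m with
  | 0 => omega
  | 1 =>
    have : c = 1 := by omega
    subst this; rfl
  | (k+2) => exact ⟨le_refl 1, by omega, h1, h2, Or.inl rfl⟩

lemma circled_key_s9 : ∀ m a b, 2 ≤ a → a ≤ m → 1 ≤ b → b ≤ m →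
    (Circled m (a, b) ↔ ¬ Circled m (m + 2 - a, m + 1 - b)) := by
  intro m
  induction m with
  | zero => intro a b _ _ _ _; omega
  | succ m ih =>
    intro a b ha2 ham hb1 hbm
    rcases Nat.eq_zero_or_pos m with hm | hm
    · omega
    obtain ⟨k, rfl⟩ : ∃ k, m = k + 1 := ⟨m - 1, by omega⟩
    -- proving at level k+2
    have e1 : k + 1 + 1 + 2 - a = k + 4 - a := by omega
    have e2 : k + 1 + 1 + 1 - b = k + 3 - b := by omega
    rw [e1, e2, circled_succ_succ, circled_succ_succ]
    have e3 : k + 2 - b + 1 = k + 3 - b := by omega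
    have e4 : k + 2 - (k + 3 - b) + 1 = b := by omega
    have e5 : k + 4 - a - 1 = k + 3 - a := by omega
    rw [e3, e4, e5]
    rcases eq_or_lt_of_le hb1 with hb1' | hb2
    · -- b = 1
      have hb : b = 1 := hb1'.symm
      subst hb
      have hrow : Circled (k+1) (1, k + 3 - a) := circled_row1 _ _ (by omega) (by omega)
      constructor
      · rintro ⟨_, _, _, _, h | ⟨_, h2, _⟩⟩ <;> omega
      · intro h
        exact absurd ⟨by omega, by omega, by omega, by omega,
          Or.inr ⟨by omega, by omega, hrow⟩⟩ h
    rcases eq_or_lt_of_le hbm with hbtop | hblt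
    · -- b = k + 2
      have hrow : Circled (k+1) (k + 3 - b, a - 1) := by
        have : k + 3 - b = 1 := by omega
        rw [this]
        exact circled_row1 _ _ (by omega) (by omega)
      constructor
      · intro _
        rintro ⟨_, _, _, hle, _⟩
        omega
      · intro _
        exact ⟨by omega, by omega, by omega, by omega,
          Or.inr ⟨ha2, by omega, hrow⟩⟩
    · -- 2 ≤ b ≤ k + 1
      have hih := ih (k + 3 - b) (a - 1) (by omega) (by omega) (by omega) (by omega)
      have e6 : k + 1 + 2 - (k + 3 - b) = b := by omega
      have e7 : k + 1 + 1 - (a - 1) = k + 3 - a := by omega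
      rw [e6, e7] at hih
      constructor
      · rintro ⟨_, _, _, _, h | ⟨_, _, h⟩⟩
        · omega
        · intro hcon
          rcases hcon with ⟨_, _, _, _, h' | ⟨_, _, h'⟩⟩
          · omega
          · exact (hih.mp h) h'
      · intro h
        refine ⟨by omega, by omega, by omega, by omega, Or.inr ⟨ha2, by omega, ?_⟩⟩
        by_contra hc
        exact h ⟨by omega, by omega, by omega, by omega,
          Or.inr ⟨by omega, by omega, hih.not_left.mp (by simpa using hc)⟩⟩

/-- Structure of the circled set for `n ≥ 2`: every cell of the last column is circled,
no cell of the first column below the top row is circled, and for `2 ≤ r ≤ n`,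
`1 ≤ c ≤ n - 1` the cell `(r, c)` is uncircled iff `(c, n - r + 1)` is circled in
`C (n - 1)`. -/
theorem circled_structure (n : ℕ) (hn : 2 ≤ n) :
    (∀ r, 1 ≤ r → r ≤ n → Circled n (r, n)) ∧
    (∀ r, 2 ≤ r → r ≤ n → ¬ Circled n (r, 1)) ∧
    (∀ r c, 2 ≤ r → r ≤ n → 1 ≤ c → c ≤ n - 1 →
      (¬ Circled n (r, c) ↔ Circled (n - 1) (c, n - r + 1))) := by
  obtain ⟨k, rfl⟩ : ∃ k, n = k + 2 := ⟨n - 2, by omega⟩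
  refine ⟨?_, ?_, ?_⟩
  · intro r h1 h2
    rcases eq_or_lt_of_le h1 with h | h
    · exact ⟨by omega, by omega, by omega, by omega, Or.inl h.symm⟩
    · refine ⟨by omega, by omega, by omega, by omega, Or.inr ⟨by omega, by omega, ?_⟩⟩
      have e : k + 2 - (k + 2) + 1 = 1 := by omega
      rw [e]
      exact circled_row1 _ _ (by omega) (by omega)
  · rintro r h2 hr ⟨_, _, _, _, h | ⟨_, h', _⟩⟩ <;> omega
  · intro r c hr2 hrn hc1 hcn
    have hcn' : c ≤ k + 1 := by omega
    have e0 : k + 2 - 1 = k + 1 := by omega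
    have e1 : k + 2 - r + 1 = k + 3 - r := by omega
    rw [e0, e1]
    rcases eq_or_lt_of_le hc1 with hc | hc
    · subst hc
      have hrow : Circled (k+1) (1, k + 3 - r) := circled_row1 _ _ (by omega) (by omega)
      constructor
      · intro _; exact hrow
      · rintro _ ⟨_, _, _, _, h | ⟨_, h', _⟩⟩ <;> omega
    · have hih := circled_key_s9 (k + 1) (k + 3 - c) (r - 1) (by omega) (by omega)
        (by omega) (by omega)
      have e6 : k + 1 + 2 - (k + 3 - c) = c := by omega
      have e7 : k + 1 + 1 - (r - 1) = k + 3 - r := by omega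
      rw [e6, e7] at hih
      constructor
      · intro h
        by_contra hc'
        have : Circled (k+1) (k + 3 - c, r - 1) := hih.mpr hc'
        have e3 : k + 2 - c + 1 = k + 3 - c := by omega
        exact h ⟨by omega, by omega, by omega, by omega,
          Or.inr ⟨hr2, by omega, by rw [e3]; exact this⟩⟩
      · rintro h ⟨_, _, _, _, h' | ⟨_, _, h'⟩⟩
        · omega
        · have e3 : k + 2 - c + 1 = k + 3 - c := by omega
          rw [e3] at h'
          exact (hih.mp h') h
end
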